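/- (Δ-System Lemma for ℵ₁) Let 𝒜 be a family of finite sets with |𝒜| = ℵ₁. Then there exists a subfamily 𝒟 ⊆ 𝒜 with |𝒟| = ℵ₁ and a set r (the root) such that for all a, b ∈ 𝒟 with a ≠ b, a ∩ b = r. -/

import Mathlib

/-!
Sort the sets by size: some size class is uncountable, so assume all members have `n` elements
and induct on `n`. If some point `x` lies in uncountably many members, remove `x` from them and
apply the induction hypothesis; putting `x` back into the root gives a Δ-system. Otherwise every
point lies in only countably many members, and a maximal pairwise disjoint subfamily is
uncountable: were it countable, the members meeting its countable union would be countably many,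
and by maximality these are all members.
-/

namespace Set

variable {α : Type*}

def IsDeltaSystem (𝒟 : Set (Set α)) (r : Set α) : Prop :=
  𝒟.Pairwise fun a b => a ∩ b = r

theorem IsDeltaSystem.mono {𝒟 ℰ : Set (Set α)} {r : Set α} (h : 𝒟.IsDeltaSystem r)
    (hℰ : ℰ ⊆ 𝒟) : ℰ.IsDeltaSystem r :=
  Pairwise.mono hℰ h

theorem PairwiseDisjoint.isDeltaSystem_empty {𝒟 : Set (Set α)} (h : 𝒟.PairwiseDisjoint id) :
    𝒟.IsDeltaSystem ∅ :=
  fun _ ha _ hb hab => disjoint_iff_inter_eq_empty.1 (h ha hb hab)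

theorem IsDeltaSystem.insert_of_image_sdiff_singleton {𝒟 : Set (Set α)} {x : α} {r : Set α}
    (hx : ∀ a ∈ 𝒟, x ∈ a) (h : ((· \ {x}) '' 𝒟).IsDeltaSystem r) :
    𝒟.IsDeltaSystem (insert x r) := by
  intro a ha b hb hab
  have hinj : InjOn (· \ {x}) 𝒟 := insert_erase_invOn.1.injOn.mono hx
  rw [← h (mem_image_of_mem _ ha) (mem_image_of_mem _ hb) (hinj.ne ha hb hab),
    ← sdiff_inter_distrib_right, insert_sdiff_singleton,
    insert_eq_of_mem (mem_inter (hx a ha) (hx b hb))]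

theorem exists_uncountable_pairwiseDisjoint {𝒜 : Set (Set α)} (h𝒜 : ¬𝒜.Countable)
    (hcount : ∀ a ∈ 𝒜, a.Countable) (hpt : ∀ x, {a ∈ 𝒜 | x ∈ a}.Countable) :
    ∃ 𝒟 ⊆ 𝒜, ¬𝒟.Countable ∧ 𝒟.PairwiseDisjoint id := by
  obtain ⟨𝒟, h𝒟⟩ : ∃ 𝒟, Maximal (fun 𝒟 => 𝒟 ⊆ 𝒜 ∧ 𝒟.PairwiseDisjoint id) 𝒟 :=
    zorn_subset _ fun c hc hchain =>
      ⟨⋃₀ c, ⟨sUnion_subset fun _ hs => (hc hs).1,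
        (hchain.pairwiseDisjoint_sUnion id).2 fun _ hs => (hc hs).2⟩,
        fun _ => subset_sUnion_of_mem⟩
  obtain ⟨h𝒟𝒜, h𝒟disj⟩ := h𝒟.prop
  refine ⟨𝒟, h𝒟𝒜, fun h𝒟c => h𝒜 ?_, h𝒟disj⟩
  have hcover : 𝒜 ⊆ 𝒟 ∪ ⋃ d ∈ 𝒟, ⋃ x ∈ d, {a ∈ 𝒜 | x ∈ a} := by
    intro a ha
    by_cases hmeet : ∃ d ∈ 𝒟, ∃ x ∈ d, x ∈ a
    · obtain ⟨d, hd, x, hxd, hxa⟩ := hmeet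
      exact Or.inr (mem_biUnion hd (mem_biUnion hxd ⟨ha, hxa⟩))
    · refine Or.inl (h𝒟.mem_of_prop_insert
        ⟨insert_subset ha h𝒟𝒜, h𝒟disj.insert fun d hd _ => ?_⟩)
      exact disjoint_left.2 fun x hxa hxd => hmeet ⟨d, hd, x, hxd, hxa⟩
  exact (h𝒟c.union (h𝒟c.biUnion fun d hd =>
    (hcount d (h𝒟𝒜 hd)).biUnion fun x _ => hpt x)).mono hcover

theorem exists_uncountable_isDeltaSystem_of_encard_eq (n : ℕ) {𝒜 : Set (Set α)}
    (h𝒜 : ¬𝒜.Countable) (hn : ∀ a ∈ 𝒜, a.encard = n) :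
    ∃ 𝒟 ⊆ 𝒜, ¬𝒟.Countable ∧ ∃ r, 𝒟.IsDeltaSystem r := by
  induction n generalizing 𝒜 with
  | zero =>
    exact absurd ((countable_singleton ∅).mono fun a ha => encard_eq_zero.1 (hn a ha)) h𝒜
  | succ k ih =>
    by_cases hpt : ∀ x, {a ∈ 𝒜 | x ∈ a}.Countable
    · obtain ⟨𝒟, h𝒟𝒜, h𝒟, hdisj⟩ := exists_uncountable_pairwiseDisjoint h𝒜
        (fun a ha => (finite_of_encard_eq_coe (hn a ha)).countable) hpt
      exact ⟨𝒟, h𝒟𝒜, h𝒟, ∅, hdisj.isDeltaSystem_empty⟩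
    obtain ⟨x, hx⟩ := not_forall.1 hpt
    have hinj : InjOn (· \ {x}) {a ∈ 𝒜 | x ∈ a} :=
      insert_erase_invOn.1.injOn.mono fun _ ha => ha.2
    have hcard : ∀ b ∈ (· \ {x}) '' {a ∈ 𝒜 | x ∈ a}, b.encard = k := by
      rintro _ ⟨a, ⟨ha, hxa⟩, rfl⟩
      rw [encard_sdiff_singleton_of_mem hxa, hn a ha]
      norm_cast
    obtain ⟨𝒟', h𝒟'sub, h𝒟', r, hr⟩ :=
      ih (mt (countable_of_injective_of_countable_image hinj) hx) hcard
    obtain ⟨𝒟, h𝒟, rfl⟩ := subset_image_iff.1 h𝒟'sub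
    exact ⟨𝒟, h𝒟.trans (sep_subset _ _), fun h𝒟c => h𝒟' (h𝒟c.image _), insert x r,
      hr.insert_of_image_sdiff_singleton fun _ ha => (h𝒟 ha).2⟩

theorem exists_uncountable_isDeltaSystem {𝒜 : Set (Set α)} (h𝒜 : ¬𝒜.Countable)
    (hfin : ∀ a ∈ 𝒜, a.Finite) : ∃ 𝒟 ⊆ 𝒜, ¬𝒟.Countable ∧ ∃ r, 𝒟.IsDeltaSystem r := by
  have hslices : 𝒜 ⊆ ⋃ n : ℕ, {a ∈ 𝒜 | a.encard = n} :=
    fun a ha => mem_iUnion.2 ⟨_, ha, (hfin a ha).encard_eq_coe⟩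
  obtain ⟨n, hn⟩ : ∃ n : ℕ, ¬{a ∈ 𝒜 | a.encard = n}.Countable := by
    by_contra! h
    exact h𝒜 ((countable_iUnion h).mono hslices)
  obtain ⟨𝒟, h𝒟, h𝒟c, r, hr⟩ :=
    exists_uncountable_isDeltaSystem_of_encard_eq n hn fun a ha => ha.2
  exact ⟨𝒟, h𝒟.trans (sep_subset _ _), h𝒟c, r, hr⟩

end Set

open Cardinal in
/-- Δ-System Lemma for `ℵ₁`: a family of finite sets of cardinality `ℵ₁`
has a subfamily of cardinality `ℵ₁` forming a Δ-system with some root `r`. -/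
theorem delta_system_lemma_aleph_one {α : Type*} (𝒜 : Set (Set α))
    (hfin : ∀ a ∈ 𝒜, a.Finite) (hcard : Cardinal.mk ↥𝒜 = Cardinal.aleph 1) :
    ∃ 𝒟 ⊆ 𝒜, Cardinal.mk ↥𝒟 = Cardinal.aleph 1 ∧
      ∃ root : Set α, ∀ a ∈ 𝒟, ∀ b ∈ 𝒟, a ≠ b → a ∩ b = root := by
  have h𝒜 : ¬𝒜.Countable := fun h => (h.le_aleph0.trans_lt aleph0_lt_aleph_one).ne hcard
  obtain ⟨𝒟, h𝒟𝒜, h𝒟, r, hr⟩ := Set.exists_uncountable_isDeltaSystem h𝒜 hfin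
  have h𝒟card : aleph 1 ≤ mk 𝒟 :=
    aleph_one_le_iff.2 (not_le.1 (mt le_aleph0_iff_set_countable.1 h𝒟))
  obtain ⟨ℰ, hℰ𝒟, hℰ⟩ := le_mk_iff_exists_subset.1 h𝒟card
  exact ⟨ℰ, hℰ𝒟.trans h𝒟𝒜, hℰ, r, hr.mono hℰ𝒟⟩
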